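/- arXiv:1307.1033 — 7 statements merged into one kernel-verified Lean document; each statement's English description precedes it below -/
import Mathlib

section
/- With the notation above (each φ_i invertible), the elements h_i := 1 + ŷⁱ x_i and 1 + yⁱ x̂_i of End(W_i) are equal, and each h_i is invertible. -/
/-!
Writing `ψ = φ_{i-1}⁻¹`, the two expressions differ only by associativity of composition.
Since `φ_i = φ_{i-1} + x_i yⁱ`, the endomorphism `1 + (ψ x_i) yⁱ = ψ φ_i` of `V` is invertible,
and invertibility of `1 + b a` passes to `1 + a b` (Jacobson's lemma, for maps between two
different modules): `1 - a (1 + b a)⁻¹ b` inverts `1 + a b`.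
-/

namespace LinearMap

variable {R M N : Type*} [Ring R] [AddCommGroup M] [Module R M] [AddCommGroup N] [Module R N]

theorem comp_one_add_comp (a : M →ₗ[R] N) (b : N →ₗ[R] M) :
    a ∘ₗ (1 + b ∘ₗ a) = (1 + a ∘ₗ b) ∘ₗ a := by
  simp only [comp_add, add_comp, Module.End.one_eq_id, comp_id, id_comp, comp_assoc]

theorem isUnit_one_add_comp_of_isUnit_one_add_comp {a : M →ₗ[R] N} {b : N →ₗ[R] M}
    (h : IsUnit ((1 : Module.End R M) + b ∘ₗ a)) : IsUnit ((1 : Module.End R N) + a ∘ₗ b) := by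
  obtain ⟨u, hu⟩ := h
  have hright : (1 + a ∘ₗ b) ∘ₗ a ∘ₗ (↑u⁻¹ : Module.End R M) ∘ₗ b = a ∘ₗ b := by
    rw [← comp_assoc, ← comp_one_add_comp, ← hu, comp_assoc, ← comp_assoc b,
      ← Module.End.mul_eq_comp, Units.mul_inv, Module.End.one_eq_id, id_comp]
  have hleft : (a ∘ₗ (↑u⁻¹ : Module.End R M) ∘ₗ b) ∘ₗ (1 + a ∘ₗ b) = a ∘ₗ b := by
    rw [comp_assoc, comp_assoc, comp_one_add_comp b a, ← hu, ← comp_assoc b,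
      ← Module.End.mul_eq_comp, Units.inv_mul, Module.End.one_eq_id, id_comp]
  refine isUnit_iff_exists.mpr ⟨1 - a ∘ₗ (↑u⁻¹ : Module.End R M) ∘ₗ b, ?_, ?_⟩
  · rw [Module.End.mul_eq_comp, comp_sub, hright, Module.End.one_eq_id, comp_id,
      add_sub_cancel_right]
  · rw [Module.End.mul_eq_comp, sub_comp, hleft, Module.End.one_eq_id, id_comp,
      add_sub_cancel_right]

end LinearMap

theorem Ring.one_add_inverse_mul {R : Type*} [Ring R] {f : R} (hf : IsUnit f) (g : R) :
    1 + Ring.inverse f * g = Ring.inverse f * (f + g) := by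
  rw [mul_add, Ring.inverse_mul_cancel f hf]

theorem stmt_4_general (V : Type) [AddCommGroup V] [Module ℂ V]
    (W : ℕ → Type) [∀ i, AddCommGroup (W i)] [∀ i, Module ℂ (W i)]
    (x : ∀ i, W i →ₗ[ℂ] V) (y : ∀ i, V →ₗ[ℂ] W i)
    (φ : ℕ → Module.End ℂ V)
    (hφdef : ∀ n, φ n = 1 + ∑ j ∈ Finset.range n, (x j) ∘ₗ (y j))
    (hφ : ∀ n, IsUnit (φ n)) :
    ∀ i, ((1 : Module.End ℂ (W i)) + ((y i) ∘ₗ (Ring.inverse (φ i))) ∘ₗ (x i)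
            = (1 : Module.End ℂ (W i)) + (y i) ∘ₗ ((Ring.inverse (φ i)) ∘ₗ (x i)))
        ∧ IsUnit ((1 : Module.End ℂ (W i)) + ((y i) ∘ₗ (Ring.inverse (φ i))) ∘ₗ (x i)) := by
  intro i
  have hsucc : φ (i + 1) = φ i + x i ∘ₗ y i := by
    rw [hφdef, hφdef, Finset.sum_range_succ, add_assoc]
  refine ⟨by rw [LinearMap.comp_assoc], ?_⟩
  rw [LinearMap.comp_assoc]
  apply LinearMap.isUnit_one_add_comp_of_isUnit_one_add_comp
  rw [LinearMap.comp_assoc, ← Module.End.mul_eq_comp, Ring.one_add_inverse_mul (hφ i), ← hsucc]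
  exact (isUnit_ringInverse.mpr (hφ i)).mul (hφ (i + 1))

/-- With the notation above (each `φ_i` invertible), the elements
`h_i = 1 + ŷⁱ x_i` and `1 + yⁱ x̂_i` of `End(W_i)` are equal, and each `h_i` is
invertible. -/
theorem stmt_4 (V : Type) [AddCommGroup V] [Module ℂ V] [FiniteDimensional ℂ V]
    (W : ℕ → Type) [∀ i, AddCommGroup (W i)] [∀ i, Module ℂ (W i)]
    [∀ i, FiniteDimensional ℂ (W i)]
    (x : ∀ i, W i →ₗ[ℂ] V) (y : ∀ i, V →ₗ[ℂ] W i)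
    (φ : ℕ → Module.End ℂ V)
    (hφdef : ∀ n, φ n = 1 + ∑ j ∈ Finset.range n, (x j) ∘ₗ (y j))
    (hφ : ∀ n, IsUnit (φ n)) :
    ∀ i, ((1 : Module.End ℂ (W i)) + ((y i) ∘ₗ (Ring.inverse (φ i))) ∘ₗ (x i)
            = (1 : Module.End ℂ (W i)) + (y i) ∘ₗ ((Ring.inverse (φ i)) ∘ₗ (x i)))
        ∧ IsUnit ((1 : Module.End ℂ (W i)) + ((y i) ∘ₗ (Ring.inverse (φ i))) ∘ₗ (x i)) :=
  stmt_4_general V W x y φ hφdef hφ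
end

section
/- With the notation above (each φ_i invertible), the element 1 + y∘x ∈ End(W) admits the block Gauss decomposition 1 + yx = u₋⁻¹ h u₊, where u₋ = 1 − [ŷⁱ x_j]_{i>j} is block lower-triangular unipotent, h ∈ End(W) is block diagonal with blocks h_i = 1 + ŷⁱ x_i, and u₊ is block upper-triangular unipotent determined by h u₊ = 1 + [ŷⁱ x_j]_{i≤j}. In particular h u₊ − u₋ equals the full 'generalized Gram matrix' [ŷⁱ x_j] ∈ End(W). -/
/-!
Put `L = [ŷⁱ x_j]_{i>j}`. Since `φ_{i-1} = 1 + ∑_{j<i} x_j yʲ`, the `i`-th block row of `L y` is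
`ŷⁱ (φ_{i-1} - 1) = yⁱ - ŷⁱ`, i.e. `(1 - L) y = ŷ`. Hence `(1 - L)(1 + y x) = 1 - L + ŷ x`, and
`ŷ x` is the Gram matrix `[ŷⁱ x_j]`, so this equals `1 + [ŷⁱ x_j]_{i≤j} = h + [ŷⁱ x_j]_{i<j}`.
The block `h_i = 1 + ŷⁱ x_i` is invertible because `1 + x_i ŷⁱ = φ_i φ_{i-1}⁻¹` is, so
`u₊ = 1 + h⁻¹ [ŷⁱ x_j]_{i<j}`; and `u₋ = 1 - L` is invertible because `L` is nilpotent.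
Blocks are indexed from `0` here, so the `φ_{i-1}` above is `φ i`.
-/

open LinearMap in
/-- The block matrix endomorphism of `⊕ W_i` with `(i,j)` block `a i j : W j → W i`. -/
noncomputable def blockMat5 {s : ℕ} (W : Fin s → Type)
    [∀ i, AddCommGroup (W i)] [∀ i, Module ℂ (W i)]
    (a : ∀ i j : Fin s, W j →ₗ[ℂ] W i) : Module.End ℂ (∀ i, W i) :=
  ∑ i, ∑ j, (LinearMap.single ℂ W i) ∘ₗ (a i j) ∘ₗ (LinearMap.proj j)

section OneAddComp

variable {R M N : Type*} [Ring R] [AddCommGroup M] [Module R M] [AddCommGroup N] [Module R N]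

theorem isUnit_one_add_comp_comm (a : M →ₗ[R] N) (b : N →ₗ[R] M)
    (hab : IsUnit ((1 : Module.End R N) + a ∘ₗ b)) : IsUnit ((1 : Module.End R M) + b ∘ₗ a) := by
  set u := Ring.inverse ((1 : Module.End R N) + a ∘ₗ b)
  have hu : ((1 : Module.End R N) + a ∘ₗ b) ∘ₗ u = 1 := Ring.mul_inverse_cancel _ hab
  have hu' : u ∘ₗ ((1 : Module.End R N) + a ∘ₗ b) = 1 := Ring.inverse_mul_cancel _ hab
  refine isUnit_iff_exists.2 ⟨1 - b ∘ₗ u ∘ₗ a, ?_, ?_⟩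
  · calc (1 + b ∘ₗ a) * (1 - b ∘ₗ u ∘ₗ a)
        = 1 + b ∘ₗ a - b ∘ₗ (((1 : Module.End R N) + a ∘ₗ b) ∘ₗ u) ∘ₗ a := by
          simp only [Module.End.mul_eq_comp, LinearMap.comp_sub, LinearMap.add_comp,
            LinearMap.comp_add, LinearMap.comp_assoc, Module.End.one_eq_id, LinearMap.id_comp,
            LinearMap.comp_id]
      _ = 1 := by rw [hu]; simp [Module.End.one_eq_id]
  · calc (1 - b ∘ₗ u ∘ₗ a) * (1 + b ∘ₗ a)
        = 1 + b ∘ₗ a - b ∘ₗ (u ∘ₗ ((1 : Module.End R N) + a ∘ₗ b)) ∘ₗ a := by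
          simp only [Module.End.mul_eq_comp, LinearMap.sub_comp, LinearMap.add_comp,
            LinearMap.comp_add, LinearMap.comp_assoc, Module.End.one_eq_id, LinearMap.id_comp,
            LinearMap.comp_id]
          abel
      _ = 1 := by rw [hu']; simp [Module.End.one_eq_id]

theorem isUnit_one_add_comp_inverse {p q : Module.End R M} (hp : IsUnit p) (hq : IsUnit q)
    (f : N →ₗ[R] M) (g : M →ₗ[R] N) (hpq : q = p + f ∘ₗ g) :
    IsUnit ((1 : Module.End R N) + (g ∘ₗ Ring.inverse p) ∘ₗ f) := by
  refine isUnit_one_add_comp_comm f _ ?_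
  have : (1 : Module.End R M) + f ∘ₗ g ∘ₗ Ring.inverse p = q * Ring.inverse p := by
    rw [hpq, add_mul, Ring.mul_inverse_cancel _ hp]
    rfl
  rw [this]
  exact hq.mul (isUnit_ringInverse.2 hp)

end OneAddComp

theorem Fin.sum_ite_val_lt_succ {s : ℕ} {M : Type*} [AddCommMonoid M] (f : Fin s → M)
    (i : Fin s) :
    ∑ k : Fin s, (if (k : ℕ) < i + 1 then f k else 0)
      = (∑ k : Fin s, if (k : ℕ) < i then f k else 0) + f i := by
  rw [← Finset.sum_filter, ← Finset.sum_filter, add_comm _ (f i), ← Finset.sum_insert (by simp)]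
  congr 1
  ext k
  simp only [Finset.mem_filter, Finset.mem_insert, Finset.mem_univ, true_and, Fin.ext_iff]
  omega

theorem LinearMap.isUnit_piMap {R ι : Type*} {M : ι → Type*} [Semiring R]
    [∀ i, AddCommMonoid (M i)] [∀ i, Module R (M i)] {f : ∀ i, Module.End R (M i)}
    (hf : ∀ i, IsUnit (f i)) : IsUnit (LinearMap.piMap f) := by
  refine isUnit_iff_exists.2 ⟨LinearMap.piMap fun i => Ring.inverse (f i), ?_, ?_⟩
  · refine LinearMap.ext fun w => funext fun i => ?_
    exact LinearMap.congr_fun (Ring.mul_inverse_cancel _ (hf i)) (w i)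
  · refine LinearMap.ext fun w => funext fun i => ?_
    exact LinearMap.congr_fun (Ring.inverse_mul_cancel _ (hf i)) (w i)

section BlockMatrix

variable {s : ℕ} {W : Fin s → Type} [∀ i, AddCommGroup (W i)] [∀ i, Module ℂ (W i)]
  {U : Type*} [AddCommGroup U] [Module ℂ U]

theorem blockMat5_apply (a : ∀ i j : Fin s, W j →ₗ[ℂ] W i) (w : ∀ i, W i) (i : Fin s) :
    blockMat5 W a w i = ∑ j, a i j (w j) := by
  simp only [blockMat5, LinearMap.sum_apply, Finset.sum_apply, LinearMap.coe_comp,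
    Function.comp_apply, LinearMap.coe_single, LinearMap.coe_proj, Function.eval]
  rw [Finset.sum_comm]
  simp

theorem blockMat5_add_of_eq {a b c : ∀ i j : Fin s, W j →ₗ[ℂ] W i}
    (habc : ∀ i j, a i j + b i j = c i j) : blockMat5 W a + blockMat5 W b = blockMat5 W c := by
  simp only [blockMat5, ← Finset.sum_add_distrib, ← LinearMap.comp_add, ← LinearMap.add_comp, habc]

theorem piMap_mul_blockMat5 (f : ∀ i, Module.End ℂ (W i)) (a : ∀ i j : Fin s, W j →ₗ[ℂ] W i) :
    LinearMap.piMap f * blockMat5 W a = blockMat5 W (fun i j => f i ∘ₗ a i j) := by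
  refine LinearMap.ext fun w => funext fun i => ?_
  simp [blockMat5_apply]

theorem piMap_mul_one_add_blockMat5_inverse {d : ∀ i, Module.End ℂ (W i)}
    (hd : ∀ i, IsUnit (d i)) (a : ∀ i j : Fin s, W j →ₗ[ℂ] W i) :
    LinearMap.piMap d * (1 + blockMat5 W (fun i j => Ring.inverse (d i) ∘ₗ a i j))
      = LinearMap.piMap d + blockMat5 W a := by
  have hdd : ∀ i, d i ∘ₗ Ring.inverse (d i) = 1 := fun i => Ring.mul_inverse_cancel _ (hd i)
  rw [mul_add, mul_one, piMap_mul_blockMat5]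
  simp only [← LinearMap.comp_assoc, hdd, Module.End.one_eq_id, LinearMap.id_comp]

theorem blockMat5_diag (g : ∀ i, U →ₗ[ℂ] W i) (f : ∀ j, W j →ₗ[ℂ] U) :
    blockMat5 W (fun i j => if i = j then g i ∘ₗ f j else 0)
      = LinearMap.piMap (fun i => g i ∘ₗ f i) := by
  refine LinearMap.ext fun w => funext fun i => ?_
  rw [blockMat5_apply, Finset.sum_eq_single i (fun j _ hj => by simp [Ne.symm hj]) (by simp)]
  simp

theorem blockMat5_eq_pi_comp (g : ∀ i, U →ₗ[ℂ] W i) (f : (∀ i, W i) →ₗ[ℂ] U) :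
    blockMat5 W (fun i j => g i ∘ₗ f ∘ₗ LinearMap.single ℂ W j) = LinearMap.pi g ∘ₗ f := by
  refine LinearMap.ext fun w => funext fun i => ?_
  simp [blockMat5_apply, ← map_sum, LinearMap.sum_single_apply]

theorem isNilpotent_blockMat5 (c : ∀ i j : Fin s, W j →ₗ[ℂ] W i)
    (hc : ∀ i j, ¬ j < i → c i j = 0) : IsNilpotent (blockMat5 W c) := by
  have key : ∀ m w, ∀ i : Fin s, (i : ℕ) < m → (blockMat5 W c ^ m) w i = 0 := by
    intro m
    induction m with
    | zero => intro w i hi; omega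
    | succ m ih =>
      intro w i hi
      rw [pow_succ', Module.End.mul_apply, blockMat5_apply]
      refine Finset.sum_eq_zero fun j _ => ?_
      by_cases hji : j < i
      · rw [ih w j (by omega), map_zero]
      · rw [hc i j hji, LinearMap.zero_apply]
  exact ⟨s, LinearMap.ext fun w => funext fun i => key s w i i.isLt⟩

theorem one_sub_blockMat5_lower_comp (y : U →ₗ[ℂ] ∀ i, W i) (xc : ∀ j, W j →ₗ[ℂ] U)
    (yhat : ∀ i, U →ₗ[ℂ] W i)
    (hyhat : ∀ i, yhat i ∘ₗ (1 + ∑ j, if j < i then xc j ∘ₗ LinearMap.proj j ∘ₗ y else 0)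
      = LinearMap.proj i ∘ₗ y) :
    (1 - blockMat5 W (fun i j => if j < i then yhat i ∘ₗ xc j else 0)) ∘ₗ y
      = LinearMap.pi yhat := by
  refine LinearMap.ext fun v => funext fun i => ?_
  have hi := LinearMap.congr_fun (hyhat i) v
  simp only [LinearMap.coe_comp, Function.comp_apply, LinearMap.add_apply, Module.End.one_apply,
    LinearMap.coe_sum, Finset.sum_apply, map_add, map_sum, LinearMap.coe_proj, Function.eval] at hi
  simp only [LinearMap.coe_comp, Function.comp_apply, LinearMap.sub_apply, Module.End.one_apply,
    Pi.sub_apply, ← hi, blockMat5_apply, LinearMap.pi_apply]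
  rw [add_sub_assoc, add_eq_left, sub_eq_zero]
  refine Finset.sum_congr rfl fun j _ => ?_
  split_ifs <;> simp

theorem one_sub_blockMat5_lower_mul (x : (∀ i, W i) →ₗ[ℂ] U) (y : U →ₗ[ℂ] ∀ i, W i)
    (xc : ∀ j, W j →ₗ[ℂ] U) (hxc : ∀ j, xc j = x ∘ₗ LinearMap.single ℂ W j)
    (yhat : ∀ i, U →ₗ[ℂ] W i)
    (hyhat : ∀ i, yhat i ∘ₗ (1 + ∑ j, if j < i then xc j ∘ₗ LinearMap.proj j ∘ₗ y else 0)
      = LinearMap.proj i ∘ₗ y) :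
    (1 - blockMat5 W (fun i j => if j < i then yhat i ∘ₗ xc j else 0)) * (1 + y ∘ₗ x)
      = 1 - blockMat5 W (fun i j => if j < i then yhat i ∘ₗ xc j else 0)
        + blockMat5 W (fun i j => yhat i ∘ₗ xc j) := by
  rw [mul_add, mul_one, Module.End.mul_eq_comp _ (y ∘ₗ x), ← LinearMap.comp_assoc,
    one_sub_blockMat5_lower_comp y xc yhat hyhat, ← blockMat5_eq_pi_comp]
  simp only [hxc]

end BlockMatrix

theorem stmt_5_general (V : Type) [AddCommGroup V] [Module ℂ V]
    (s : ℕ) (W : Fin s → Type) [∀ i, AddCommGroup (W i)] [∀ i, Module ℂ (W i)]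
    (x : (∀ i, W i) →ₗ[ℂ] V) (y : V →ₗ[ℂ] ∀ i, W i)
    (xc : ∀ i : Fin s, W i →ₗ[ℂ] V) (yc : ∀ i : Fin s, V →ₗ[ℂ] W i)
    (hxc : ∀ i, xc i = x ∘ₗ LinearMap.single ℂ W i)
    (hyc : ∀ i, yc i = LinearMap.proj i ∘ₗ y)
    (φ : ℕ → Module.End ℂ V)
    (hφdef : ∀ n, φ n = 1 + ∑ i : Fin s, if (i : ℕ) < n then (xc i) ∘ₗ (yc i) else 0)
    (hφ : ∀ n, IsUnit (φ n))
    (yhat : ∀ i : Fin s, V →ₗ[ℂ] W i)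
    (hyhat : ∀ i, yhat i = (yc i) ∘ₗ Ring.inverse (φ i))
    (um : Module.End ℂ (∀ i, W i))
    (hum : um = 1 - blockMat5 W (fun i j => if j < i then (yhat i) ∘ₗ (xc j) else 0))
    (h : Module.End ℂ (∀ i, W i))
    (hh : h = 1 + blockMat5 W (fun i j => if i = j then (yhat i) ∘ₗ (xc j) else 0)) :
    ∃ up : Module.End ℂ (∀ i, W i),
      (∃ c : ∀ i j : Fin s, W j →ₗ[ℂ] W i,
          (∀ i j, ¬ i < j → c i j = 0) ∧ up = 1 + blockMat5 W c) ∧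
      h * up = 1 + blockMat5 W (fun i j => if i ≤ j then (yhat i) ∘ₗ (xc j) else 0) ∧
      IsUnit um ∧ IsUnit h ∧
      (1 : Module.End ℂ (∀ i, W i)) + y ∘ₗ x = Ring.inverse um * h * up ∧
      h * up - um = blockMat5 W (fun i j => (yhat i) ∘ₗ (xc j)) := by
  set d : ∀ i, Module.End ℂ (W i) := fun i => 1 + yhat i ∘ₗ xc i
  have hd : ∀ i, IsUnit (d i) := fun i => by
    rw [show d i = 1 + yhat i ∘ₗ xc i from rfl, hyhat]
    refine isUnit_one_add_comp_inverse (hφ i) (hφ (i + 1)) (xc i) (yc i) ?_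
    rw [hφdef, hφdef, Fin.sum_ite_val_lt_succ, add_assoc]
  have hh' : h = LinearMap.piMap d := by
    rw [hh, blockMat5_diag]
    rfl
  have hup : h * (1 + blockMat5 W fun i j =>
        Ring.inverse (d i) ∘ₗ if i < j then yhat i ∘ₗ xc j else 0)
      = 1 + blockMat5 W (fun i j => if i ≤ j then (yhat i) ∘ₗ (xc j) else 0) := by
    rw [hh', piMap_mul_one_add_blockMat5_inverse hd, ← hh', hh, add_assoc]
    exact congrArg _ (blockMat5_add_of_eq fun i j => by split_ifs <;> first | omega | simp)
  have hgram : blockMat5 W (fun i j => if i ≤ j then (yhat i) ∘ₗ (xc j) else 0)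
      + blockMat5 W (fun i j => if j < i then (yhat i) ∘ₗ (xc j) else 0)
      = blockMat5 W (fun i j => yhat i ∘ₗ xc j) :=
    blockMat5_add_of_eq fun i j => by split_ifs <;> first | omega | simp
  have hyhat_phi : ∀ i, yhat i ∘ₗ (1 + ∑ j, if j < i then xc j ∘ₗ LinearMap.proj j ∘ₗ y else 0)
      = LinearMap.proj i ∘ₗ y := fun i => by
    simp only [← hyc, ← Fin.val_fin_lt, ← hφdef, hyhat, LinearMap.comp_assoc,
      ← Module.End.mul_eq_comp, Ring.inverse_mul_cancel _ (hφ i)]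
    rfl
  have hum_unit : IsUnit um :=
    hum ▸ (isNilpotent_blockMat5 _ fun i j hij => if_neg hij).isUnit_one_sub
  refine ⟨_, ⟨_, fun i j hij => by simp [hij], rfl⟩, hup, hum_unit,
    hh' ▸ LinearMap.isUnit_piMap hd, ?_, ?_⟩
  · rw [mul_assoc, hup, ← Ring.inverse_mul_cancel_left um (1 + y ∘ₗ x) hum_unit]
    congr 1
    rw [hum, one_sub_blockMat5_lower_mul x y xc hxc yhat hyhat_phi, ← hgram]
    abel
  · rw [hup, hum, ← hgram]
    abel

/-- Block Gauss decomposition `1 + yx = u₋⁻¹ h u₊` of `1 + y∘x ∈ End(W)`,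
`W = ⊕ W_i`: `u₋ = 1 − [ŷⁱ x_j]_{i>j}` lower unipotent, `h` block diagonal with blocks
`h_i = 1 + ŷⁱ x_i`, `u₊` upper unipotent determined by `h u₊ = 1 + [ŷⁱ x_j]_{i≤j}`; and
`h u₊ − u₋` is the full generalized Gram matrix `[ŷⁱ x_j]`. -/
theorem stmt_5 (V : Type) [AddCommGroup V] [Module ℂ V] [FiniteDimensional ℂ V]
    (s : ℕ) (W : Fin s → Type) [∀ i, AddCommGroup (W i)] [∀ i, Module ℂ (W i)]
    [∀ i, FiniteDimensional ℂ (W i)]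
    (x : (∀ i, W i) →ₗ[ℂ] V) (y : V →ₗ[ℂ] ∀ i, W i)
    (xc : ∀ i : Fin s, W i →ₗ[ℂ] V) (yc : ∀ i : Fin s, V →ₗ[ℂ] W i)
    (hxc : ∀ i, xc i = x ∘ₗ LinearMap.single ℂ W i)
    (hyc : ∀ i, yc i = LinearMap.proj i ∘ₗ y)
    (φ : ℕ → Module.End ℂ V)
    (hφdef : ∀ n, φ n = 1 + ∑ i : Fin s, if (i : ℕ) < n then (xc i) ∘ₗ (yc i) else 0)
    (hφ : ∀ n, IsUnit (φ n))
    (yhat : ∀ i : Fin s, V →ₗ[ℂ] W i)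
    (hyhat : ∀ i, yhat i = (yc i) ∘ₗ Ring.inverse (φ i))
    (um : Module.End ℂ (∀ i, W i))
    (hum : um = 1 - blockMat5 W (fun i j => if j < i then (yhat i) ∘ₗ (xc j) else 0))
    (h : Module.End ℂ (∀ i, W i))
    (hh : h = 1 + blockMat5 W (fun i j => if i = j then (yhat i) ∘ₗ (xc j) else 0)) :
    ∃ up : Module.End ℂ (∀ i, W i),
      (∃ c : ∀ i j : Fin s, W j →ₗ[ℂ] W i,
          (∀ i j, ¬ i < j → c i j = 0) ∧ up = 1 + blockMat5 W c) ∧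
      h * up = 1 + blockMat5 W (fun i j => if i ≤ j then (yhat i) ∘ₗ (xc j) else 0) ∧
      IsUnit um ∧ IsUnit h ∧
      (1 : Module.End ℂ (∀ i, W i)) + y ∘ₗ x = Ring.inverse um * h * up ∧
      h * up - um = blockMat5 W (fun i j => (yhat i) ∘ₗ (xc j)) :=
  stmt_5_general V s W x y xc yc hxc hyc φ hφdef hφ yhat hyhat um hum h hh
end

section
/- Let V be a finite-dimensional complex vector space with a nondegenerate symmetric bilinear form (·,·) and basis x₁,…,x_s with (x_i,x_i) = 2 for each i. Let T_i = 1 − x_i (x_i, ·) be the orthogonal reflection in x_i. Then, identifying endomorphisms of V with matrices in the basis (x_i), the product of reflections satisfies T_s ⋯ T₁ = −u₋⁻¹ u₊, where u₊ (resp. u₋) is the strictly upper (resp. lower) unipotent-triangular matrix such that u₊ + u₋ equals the Gram matrix [(x_i, x_j)]. -/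
/-!
Applying `T₁, …, T_s` to `v` in turn subtracts `∑ c_m • x_m`, with
`c_m = (x_m, T_{m-1} ⋯ T₁ v)`. Pairing with `x_i` and using that `(x_i, x_m) = lo i m` for `m < i`
shows that these coefficients solve the unitriangular system `lo *ᵥ c = ((x_i, v))ᵢ`. For `v = x_j`,
column `j` of the matrix `M` of the product is therefore `e_j - c`, so `lo * M = lo - Gram = -up`.
-/

open Matrix

section

variable {R V : Type*} [CommRing R] [AddCommGroup V] [Module R V]

theorem List.prod_reverse_ofFn_succ {α : Type*} [Monoid α] {n : ℕ} (f : Fin (n + 1) → α) :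
    (List.ofFn f).reverse.prod =
      f (Fin.last n) * (List.ofFn fun i => f i.castSucc).reverse.prod := by
  rw [List.ofFn_succ', List.concat_eq_append, List.reverse_concat, List.prod_cons]

theorem exists_mulVec_eq_and_prod_reflections_apply {n : ℕ} (B : LinearMap.BilinForm R V)
    (x : Fin n → V) (T : Fin n → Module.End R V) (hT : ∀ i v, T i v = v - B (x i) v • x i)
    (L : Matrix (Fin n) (Fin n) R) (hL : L.IsLowerTriangular) (hL1 : ∀ i, L i i = 1)
    (hBL : ∀ i m, m < i → B (x i) (x m) = L i m) (v : V) :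
    ∃ c : Fin n → R, L *ᵥ c = (fun i => B (x i) v) ∧
      (List.ofFn T).reverse.prod v = v - ∑ m, c m • x m := by
  induction n with
  | zero => exact ⟨0, funext fun i => i.elim0, by simp⟩
  | succ n ih =>
    obtain ⟨c, hc, hprod⟩ := ih (fun i => x i.castSucc) (fun i => T i.castSucc)
      (fun i => hT _) (L.submatrix Fin.castSucc Fin.castSucc)
      (fun i j h => hL (Fin.castSucc_lt_castSucc_iff.mpr h)) (fun i => hL1 _)
      (fun i m h => hBL _ _ (Fin.castSucc_lt_castSucc_iff.mpr h))
    set y := v - ∑ m, c m • x m.castSucc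
    refine ⟨Fin.snoc c (B (x (Fin.last n)) y), ?_, ?_⟩
    · funext i
      induction i using Fin.lastCases with
      | last =>
        have hlast : ∑ m, L (Fin.last n) m.castSucc * c m =
            ∑ m, c m * B (x (Fin.last n)) (x m.castSucc) :=
          Finset.sum_congr rfl fun m _ => by rw [hBL _ _ (Fin.castSucc_lt_last m), mul_comm]
        simp only [mulVec, dotProduct, Fin.sum_univ_castSucc, Fin.snoc_castSucc, Fin.snoc_last, hL1,
          hlast, y, map_sub, map_sum, map_smul, smul_eq_mul]
        ring
      | cast i =>
        have h0 : L i.castSucc (Fin.last n) = 0 := hL (Fin.castSucc_lt_last i)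
        simpa only [mulVec, dotProduct, Fin.sum_univ_castSucc, Fin.snoc_castSucc, Fin.snoc_last,
          h0, zero_mul, add_zero, submatrix_apply] using congrFun hc i
    · rw [List.prod_reverse_ofFn_succ, Module.End.mul_apply, hprod, hT, Fin.sum_univ_castSucc]
      simp only [Fin.snoc_castSucc, Fin.snoc_last, y]
      abel

theorem mul_toMatrix_prod_reflections {n : ℕ} (B : LinearMap.BilinForm R V)
    (b : Module.Basis (Fin n) R V) (T : Fin n → Module.End R V)
    (hT : ∀ i v, T i v = v - B (b i) v • b i)
    (L : Matrix (Fin n) (Fin n) R) (hL : L.IsLowerTriangular) (hL1 : ∀ i, L i i = 1)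
    (hBL : ∀ i m, m < i → B (b i) (b m) = L i m) :
    L * LinearMap.toMatrix b b (List.ofFn T).reverse.prod = L - of fun i j => B (b i) (b j) := by
  ext i j
  obtain ⟨c, hc, hprod⟩ := exists_mulVec_eq_and_prod_reflections_apply B b T hT L hL hL1 hBL (b j)
  have hcol : ∀ k, LinearMap.toMatrix b b (List.ofFn T).reverse.prod k j =
      (Pi.single j 1 : Fin n → R) k - c k := by
    intro k
    rw [LinearMap.toMatrix_apply, hprod, map_sub, Finsupp.sub_apply, b.repr_sum_self, b.repr_self,
      Finsupp.single_eq_pi_single]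
  simp only [mul_apply, hcol, mul_sub, Finset.sum_sub_distrib, Pi.single_apply, mul_ite, mul_one,
    mul_zero, Finset.sum_ite_eq', Finset.mem_univ, if_true, Matrix.sub_apply, of_apply]
  exact congrArg _ (congrFun hc i)

end

theorem stmt_7_general (s : ℕ) (V : Type) [AddCommGroup V] [Module ℂ V]
    (B : LinearMap.BilinForm ℂ V)
    (x : Module.Basis (Fin s) ℂ V)
    (T : Fin s → Module.End ℂ V) (hT : ∀ i v, T i v = v - (B (x i) v) • x i)
    (up lo : Matrix (Fin s) (Fin s) ℂ)
    (hup0 : ∀ i j : Fin s, j < i → up i j = 0)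
    (hlo0 : ∀ i j : Fin s, i < j → lo i j = 0) (hlo1 : ∀ i, lo i i = 1)
    (hGram : up + lo = Matrix.of fun i j => B (x i) (x j)) :
    LinearMap.toMatrix x x ((List.ofFn T).reverse.prod) = -(lo⁻¹ * up) := by
  have hlo : lo.IsLowerTriangular := fun i j h => hlo0 i j h
  have hBL : ∀ i m, m < i → B (x i) (x m) = lo i m := fun i m h => by
    simpa [hup0 i m h] using (congrFun₂ hGram i m).symm
  have hdet : IsUnit lo.det := by simp [det_of_isLowerTriangular lo hlo, hlo1]
  calc _ = lo⁻¹ * (lo * LinearMap.toMatrix x x (List.ofFn T).reverse.prod) :=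
        (nonsing_inv_mul_cancel_left _ _ hdet).symm
    _ = -(lo⁻¹ * up) := by
      rw [mul_toMatrix_prod_reflections B x T hT lo hlo hlo1 hBL, ← hGram, sub_add_cancel_right,
        Matrix.mul_neg]

/-- For a basis `x₁,…,x_s` of a complex vector space with nondegenerate symmetric
bilinear form, with `(x_i,x_i) = 2`, the product of the orthogonal reflections
`T_i = 1 − x_i(x_i,·)` satisfies `T_s ⋯ T₁ = −u₋⁻¹ u₊` in the basis `(x_i)`, where
`u₊` (resp. `u₋`) is upper (resp. lower) triangular unipotent with
`u₊ + u₋ = Gram matrix`. -/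
theorem stmt_7 (s : ℕ) (V : Type) [AddCommGroup V] [Module ℂ V] [FiniteDimensional ℂ V]
    (B : LinearMap.BilinForm ℂ V) (hsymm : ∀ u v, B u v = B v u)
    (hnd : B.Nondegenerate)
    (x : Module.Basis (Fin s) ℂ V) (hx : ∀ i, B (x i) (x i) = 2)
    (T : Fin s → Module.End ℂ V) (hT : ∀ i v, T i v = v - (B (x i) v) • x i)
    (up lo : Matrix (Fin s) (Fin s) ℂ)
    (hup0 : ∀ i j : Fin s, j < i → up i j = 0) (hup1 : ∀ i, up i i = 1)
    (hlo0 : ∀ i j : Fin s, i < j → lo i j = 0) (hlo1 : ∀ i, lo i i = 1)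
    (hGram : up + lo = Matrix.of fun i j => B (x i) (x j)) :
    LinearMap.toMatrix x x ((List.ofFn T).reverse.prod) = -(lo⁻¹ * up) :=
  stmt_7_general s V B x T hT up lo hup0 hlo0 hlo1 hGram
end

section
/- Let M ∈ GL_n(ℂ) and let (ξ₁,…,ξ_w) be nonzero complex numbers with ∏₁^w (M − ξ_i) = 0. Define d_i = rank((M − ξ₁)⋯(M − ξ_{i-1})) (so d₁ = n) and q_i = ξ_i/ξ_{i-1} (with q₁ = ξ₁). Then det(M) = ∏₁^w q_i^{d_i}. -/
/-!
The ranges `V_i` of the partial products `∏_{j<i} (M - ξ_j)` form a decreasing chain of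
`M`-invariant subspaces from `V_0 = ℂⁿ` down to `V_w = 0`, and `M` acts on `V_i / V_{i+1}` as the
scalar `ξ_i`. Hence `det M = ∏ ξ_i ^ (d_i - d_{i+1})`, proved by restricting to
`V_1 = range (M - ξ_0)` and shifting the sequence `ξ`; summation by parts turns this into
`∏ q_i ^ d_i`.
-/

open Module LinearMap

theorem LinearMap.det_eq_det_restrict_mul_pow {K V : Type*} [Field K] [AddCommGroup V]
    [Module K V] [FiniteDimensional K V] (f : Module.End K V) (c : K) {W : Submodule K V}
    (hW : ∀ x ∈ W, f x ∈ W) (hc : range (f - c • 1) ≤ W) :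
    LinearMap.det f = LinearMap.det (f.restrict hW) * c ^ (finrank K V - finrank K W) := by
  have hQ : W.mapQ W f hW = c • 1 := by
    ext x
    simpa [← Submodule.Quotient.mk_smul, Submodule.Quotient.eq] using hc (mem_range_self _ x)
  rw [det_eq_det_mul_det W f hW, hQ, det_smul, map_one, mul_one, W.finrank_quotient]

theorem LinearMap.comp_list_prod_map {R U V ι : Type*} [CommSemiring R] [AddCommMonoid U]
    [AddCommMonoid V] [Module R U] [Module R V] (φ : U →ₗ[R] V) (F : ι → Module.End R V)
    (G : ι → Module.End R U) (h : ∀ j, φ ∘ₗ G j = F j ∘ₗ φ) (l : List ι) :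
    φ ∘ₗ (l.map G).prod = (l.map F).prod ∘ₗ φ := by
  induction l with
  | nil => rfl
  | cons j l ih =>
    simp only [List.map_cons, List.prod_cons, Module.End.mul_eq_comp, ← comp_assoc, h j]
    rw [comp_assoc, ih, comp_assoc]

section LinearFactorsProd

variable {R A B : Type*} [CommSemiring R] [Ring A] [Algebra R A] [Ring B] [Algebra R B]

def linearFactorsProd (a : A) (ξ : ℕ → R) (i : ℕ) : A :=
  ((List.range i).map fun j => a - ξ j • 1).prod

variable (a : A) (ξ : ℕ → R)

@[simp]
theorem linearFactorsProd_zero : linearFactorsProd a ξ 0 = 1 := rfl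

theorem linearFactorsProd_succ (i : ℕ) :
    linearFactorsProd a ξ (i + 1) = linearFactorsProd a ξ i * (a - ξ i • 1) := by
  simp [linearFactorsProd, List.range_succ]

theorem linearFactorsProd_succ' (i : ℕ) :
    linearFactorsProd a ξ (i + 1) =
      linearFactorsProd a (fun j => ξ (j + 1)) i * (a - ξ 0 • 1) := by
  have hcomm : ∀ c c' : R, Commute (a - c • 1) (a - c' • 1) := fun c c' =>
    ((Commute.refl a).sub_right ((Commute.one_right a).smul_right c')).sub_left
      (((Commute.one_left a).smul_left c).sub_right ((Commute.one_left _).smul_left c))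
  rw [linearFactorsProd, List.range_succ_eq_map, List.map_cons, List.prod_cons, List.map_map]
  refine (Commute.list_prod_right _ _ fun b hb => ?_).eq
  obtain ⟨j, -, rfl⟩ := List.mem_map.mp hb
  exact hcomm _ _

theorem map_linearFactorsProd {F : Type*} [FunLike F A B] [AlgHomClass F R A B] (φ : F) (i : ℕ) :
    φ (linearFactorsProd a ξ i) = linearFactorsProd (φ a) ξ i := by
  simp [linearFactorsProd, map_list_prod, Function.comp_def]

end LinearFactorsProd

theorem LinearMap.det_eq_prod_pow_finrank_range_tsub {K V : Type*} [Field K] [AddCommGroup V]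
    [Module K V] [FiniteDimensional K V] (f : Module.End K V) (ξ : ℕ → K) (w : ℕ)
    (hann : linearFactorsProd f ξ w = 0) :
    LinearMap.det f = ∏ i ∈ Finset.range w, ξ i ^
      (finrank K (range (linearFactorsProd f ξ i)) -
        finrank K (range (linearFactorsProd f ξ (i + 1)))) := by
  induction w generalizing V f ξ with
  | zero =>
    have : Subsingleton V := subsingleton_of_forall_eq 0 fun x => by simpa using congr($hann x)
    simp [det_eq_one_of_subsingleton]
  | succ w ih =>
    set W := range (f - ξ 0 • 1)
    have hW : ∀ x ∈ W, f x ∈ W := by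
      rintro _ ⟨v, rfl⟩
      exact ⟨f v, by simp⟩
    set ξ' : ℕ → K := fun j => ξ (j + 1)
    have hintertwine : ∀ i, W.subtype ∘ₗ linearFactorsProd (f.restrict hW) ξ' i =
        linearFactorsProd f ξ' i ∘ₗ W.subtype := fun i =>
      W.subtype.comp_list_prod_map _ _ (fun j => rfl) _
    have hrange : ∀ i, range (W.subtype ∘ₗ linearFactorsProd (f.restrict hW) ξ' i) =
        range (linearFactorsProd f ξ (i + 1)) := fun i => by
      rw [hintertwine, range_comp, Submodule.range_subtype, linearFactorsProd_succ',
        Module.End.mul_eq_comp, range_comp]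
    have hfinrank : ∀ i, finrank K (range (linearFactorsProd (f.restrict hW) ξ' i)) =
        finrank K (range (linearFactorsProd f ξ (i + 1))) := fun i => by
      rw [← hrange, range_comp, Submodule.finrank_map_subtype_eq]
    have hann' : linearFactorsProd (f.restrict hW) ξ' w = 0 := by
      refine (cancel_left W.injective_subtype).mp ?_
      rw [comp_zero, ← range_eq_bot, hrange, hann, range_zero]
    have hfinrank_zero : finrank K (range (linearFactorsProd f ξ 0)) = finrank K V := by
      rw [linearFactorsProd_zero, Module.End.one_eq_id, range_id, finrank_top]
    have hfinrank_one : finrank K (range (linearFactorsProd f ξ 1)) = finrank K W := by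
      rw [linearFactorsProd_succ, linearFactorsProd_zero, one_mul]
    rw [det_eq_det_restrict_mul_pow f (ξ 0) hW le_rfl, ih _ _ hann', Finset.prod_range_succ']
    simp only [hfinrank, hfinrank_zero, hfinrank_one, ξ']

theorem prod_pow_tsub_succ_eq_prod_ratio_pow {K : Type*} [Field K] (ξ q : ℕ → K) (d : ℕ → ℕ)
    (w : ℕ) (hξ : ∀ i < w, ξ i ≠ 0) (hd : Antitone d) (hdw : d w = 0)
    (hq0 : q 0 = ξ 0) (hq : ∀ i, 0 < i → q i = ξ i / ξ (i - 1)) :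
    ∏ i ∈ Finset.range w, ξ i ^ (d i - d (i + 1)) = ∏ i ∈ Finset.range w, q i ^ d i := by
  cases w with
  | zero => simp
  | succ k =>
    have hpow : ∀ i ∈ Finset.range (k + 1),
        ξ i ^ (d i - d (i + 1)) = ξ i ^ d i / ξ i ^ d (i + 1) := fun i hi => by
      rw [pow_sub₀ _ (hξ i (Finset.mem_range.mp hi)) (hd i.le_succ), div_eq_mul_inv]
    have hq' : ∀ i ∈ Finset.range k,
        q (i + 1) ^ d (i + 1) = ξ (i + 1) ^ d (i + 1) / ξ i ^ d (i + 1) := fun i _ => by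
      rw [hq (i + 1) i.succ_pos, Nat.add_sub_cancel, div_pow]
    rw [Finset.prod_congr rfl hpow, Finset.prod_div_distrib,
      Finset.prod_range_succ' (fun i => q i ^ d i), Finset.prod_congr rfl hq',
      Finset.prod_div_distrib, Finset.prod_range_succ' (fun i => ξ i ^ d i),
      Finset.prod_range_succ (fun i => ξ i ^ d (i + 1)), hdw, pow_zero, mul_one, hq0,
      div_mul_eq_mul_div]

theorem stmt_8_general (n w : ℕ) (M : Matrix (Fin n) (Fin n) ℂ)
    (ξ : ℕ → ℂ) (hξ : ∀ i < w, ξ i ≠ 0)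
    (hann : ((List.range w).map fun j => M - ξ j • 1).prod = 0)
    (d : ℕ → ℕ)
    (hd : ∀ i, d i = Matrix.rank (((List.range i).map fun j => M - ξ j • 1).prod))
    (q : ℕ → ℂ) (hq0 : q 0 = ξ 0) (hq : ∀ i, 0 < i → q i = ξ i / ξ (i - 1)) :
    M.det = ∏ i ∈ Finset.range w, q i ^ d i := by
  set f := Matrix.toLinAlgEquiv' M
  have hd' : ∀ i, d i = finrank ℂ (range (linearFactorsProd f ξ i)) := fun i => by
    rw [hd, ← map_linearFactorsProd]
    rfl
  have hann' : linearFactorsProd f ξ w = 0 := by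
    rw [← map_linearFactorsProd]
    exact (map_eq_zero_iff _ Matrix.toLinAlgEquiv'.injective).mpr hann
  have hd_antitone : Antitone d := antitone_nat_of_succ_le fun i => by
    rw [hd, hd, ← linearFactorsProd, ← linearFactorsProd, linearFactorsProd_succ]
    exact Matrix.rank_mul_le_left _ _
  have hdw : d w = 0 := by rw [hd, hann, Matrix.rank_zero]
  rw [← LinearMap.det_toLin', show Matrix.toLin' M = f from rfl,
    det_eq_prod_pow_finrank_range_tsub f ξ w hann',
    ← prod_pow_tsub_succ_eq_prod_ratio_pow ξ q d w hξ hd_antitone hdw hq0 hq]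
  simp only [hd']

/-- If `M ∈ GL_n(ℂ)` is annihilated by `∏ (M − ξ_i)` with all `ξ_i ≠ 0`, and
`d_i = rank((M−ξ₁)⋯(M−ξ_{i-1}))`, `q_i = ξ_i/ξ_{i-1}` (`q₁ = ξ₁`), then
`det M = ∏ q_i^{d_i}`.  (Indices here are `0`-based.) -/
theorem stmt_8 (n w : ℕ) (M : Matrix (Fin n) (Fin n) ℂ) (hM : IsUnit M)
    (ξ : ℕ → ℂ) (hξ : ∀ i < w, ξ i ≠ 0)
    (hann : ((List.range w).map fun j => M - ξ j • 1).prod = 0)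
    (d : ℕ → ℕ)
    (hd : ∀ i, d i = Matrix.rank (((List.range i).map fun j => M - ξ j • 1).prod))
    (q : ℕ → ℂ) (hq0 : q 0 = ξ 0) (hq : ∀ i, 0 < i → q i = ξ i / ξ (i - 1)) :
    M.det = ∏ i ∈ Finset.range w, q i ^ d i :=
  stmt_8_general n w M ξ hξ hann d hd q hq0 hq
end

section
/- Suppose A : V → W and B : W → V are linear maps between finite-dimensional complex vector spaces with A injective, B surjective, and both T_V = 1 + BA and T_W = 1 + AB invertible. Then for every s ∈ ℂ* with s ≠ 1, and every k ≥ 1, the dimension of the generalized eigenspace data agree: rank((T_W − s)^k) − rank((T_W − s)^{k+1}) = rank((T_V − s)^k) − rank((T_V − s)^{k+1}). (Equivalently, the Jordan block structure of T_W and T_V at every eigenvalue s ≠ 1 coincides.) -/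
private lemma aux_le {V W : Type} [AddCommGroup V] [Module ℂ V] [FiniteDimensional ℂ V]
    [AddCommGroup W] [Module ℂ W] [FiniteDimensional ℂ W]
    (A : V →ₗ[ℂ] W) (B : W →ₗ[ℂ] V) (c : ℂ) (hc : c ≠ 0) (k : ℕ) :
    Module.finrank ℂ (LinearMap.ker (((B ∘ₗ A : Module.End ℂ V) + c • 1) ^ k)) ≤
      Module.finrank ℂ (LinearMap.ker (((A ∘ₗ B : Module.End ℂ W) + c • 1) ^ k)) := by
  set g : Module.End ℂ V := (B ∘ₗ A) + c • 1 with hg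
  set f : Module.End ℂ W := (A ∘ₗ B) + c • 1 with hf
  have comm : ∀ x : V, f (A x) = A (g x) := by
    intro x
    simp [hf, hg, LinearMap.add_apply, LinearMap.smul_apply, map_add, map_smul]
  have commk : ∀ (n : ℕ) (x : V), (f ^ n) (A x) = A ((g ^ n) x) := by
    intro n
    induction n with
    | zero => intro x; simp
    | succ m ih =>
        intro x
        rw [pow_succ, pow_succ, Module.End.mul_apply, Module.End.mul_apply, comm, ih]
  have hker : ∀ x ∈ LinearMap.ker (g ^ k), A x ∈ LinearMap.ker (f ^ k) := by
    intro x hx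
    rw [LinearMap.mem_ker] at hx ⊢
    rw [commk, hx, map_zero]
  have keyzero : ∀ (n : ℕ) (x : V), A x = 0 → (g ^ n) x = c ^ n • x := by
    intro n x hx
    induction n with
    | zero => simp
    | succ m ih =>
        rw [pow_succ, Module.End.mul_apply]
        have hgx : g x = c • x := by
          simp [hg, LinearMap.add_apply, LinearMap.smul_apply, hx]
        rw [hgx, map_smul, ih, smul_smul]
        ring_nf
  let φ : LinearMap.ker (g ^ k) →ₗ[ℂ] LinearMap.ker (f ^ k) := A.restrict hker
  have hφ : Function.Injective φ := by
    rw [injective_iff_map_eq_zero]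
    intro x hx0
    have hAx : A x.1 = 0 := by
      have := congrArg Subtype.val hx0
      simpa [φ, LinearMap.restrict_apply] using this
    have hx : (g ^ k) x.1 = 0 := x.2
    rw [keyzero k x.1 hAx] at hx
    have : x.1 = 0 := by
      have hck : c ^ k ≠ 0 := pow_ne_zero _ hc
      exact (smul_eq_zero.mp hx).resolve_left hck
    exact Subtype.ext this
  exact LinearMap.finrank_le_finrank_of_injective hφ

private lemma aux_eq {V W : Type} [AddCommGroup V] [Module ℂ V] [FiniteDimensional ℂ V]
    [AddCommGroup W] [Module ℂ W] [FiniteDimensional ℂ W]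
    (A : V →ₗ[ℂ] W) (B : W →ₗ[ℂ] V) (c : ℂ) (hc : c ≠ 0) (k : ℕ) :
    Module.finrank ℂ (LinearMap.ker (((B ∘ₗ A : Module.End ℂ V) + c • 1) ^ k)) =
      Module.finrank ℂ (LinearMap.ker (((A ∘ₗ B : Module.End ℂ W) + c • 1) ^ k)) :=
  le_antisymm (aux_le A B c hc k) (aux_le B A c hc k)

/-- If `A : V → W` is injective, `B : W → V` surjective, and `T_V = 1 + BA`,
`T_W = 1 + AB` are invertible, then for every `s ∈ ℂ*` with `s ≠ 1` and every `k ≥ 1`,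
`rank((T_W − s)^k) − rank((T_W − s)^{k+1}) = rank((T_V − s)^k) − rank((T_V − s)^{k+1})`:
the Jordan structures of `T_W` and `T_V` at every eigenvalue `s ≠ 1` coincide. -/
theorem stmt_10 (V W : Type) [AddCommGroup V] [Module ℂ V] [FiniteDimensional ℂ V]
    [AddCommGroup W] [Module ℂ W] [FiniteDimensional ℂ W]
    (A : V →ₗ[ℂ] W) (B : W →ₗ[ℂ] V)
    (hA : Function.Injective A) (hB : Function.Surjective B)
    (TV : Module.End ℂ V) (TW : Module.End ℂ W)
    (hTV : TV = 1 + B ∘ₗ A) (hTW : TW = 1 + A ∘ₗ B)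
    (hTVu : IsUnit TV) (hTWu : IsUnit TW) :
    ∀ s : ℂ, s ≠ 0 → s ≠ 1 → ∀ k : ℕ, 1 ≤ k →
      (Module.finrank ℂ (LinearMap.range ((TW - s • 1) ^ k)) : ℤ)
          - (Module.finrank ℂ (LinearMap.range ((TW - s • 1) ^ (k + 1))) : ℤ)
        = (Module.finrank ℂ (LinearMap.range ((TV - s • 1) ^ k)) : ℤ)
          - (Module.finrank ℂ (LinearMap.range ((TV - s • 1) ^ (k + 1))) : ℤ) := by
  intro s hs0 hs1 k hk
  set c : ℂ := 1 - s with hcdef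
  have hc : c ≠ 0 := sub_ne_zero_of_ne (Ne.symm hs1)
  have hW : TW - s • 1 = (A ∘ₗ B : Module.End ℂ W) + c • 1 := by
    rw [hTW, hcdef]; module
  have hV : TV - s • 1 = (B ∘ₗ A : Module.End ℂ V) + c • 1 := by
    rw [hTV, hcdef]; module
  rw [hW, hV]
  have rnW : ∀ n : ℕ,
      (Module.finrank ℂ (LinearMap.range (((A ∘ₗ B : Module.End ℂ W) + c • 1) ^ n)) : ℤ)
        = (Module.finrank ℂ W : ℤ)
          - (Module.finrank ℂ (LinearMap.ker (((A ∘ₗ B : Module.End ℂ W) + c • 1) ^ n)) : ℤ) := by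
    intro n
    have := LinearMap.finrank_range_add_finrank_ker (((A ∘ₗ B : Module.End ℂ W) + c • 1) ^ n)
    omega
  have rnV : ∀ n : ℕ,
      (Module.finrank ℂ (LinearMap.range (((B ∘ₗ A : Module.End ℂ V) + c • 1) ^ n)) : ℤ)
        = (Module.finrank ℂ V : ℤ)
          - (Module.finrank ℂ (LinearMap.ker (((B ∘ₗ A : Module.End ℂ V) + c • 1) ^ n)) : ℤ) := by
    intro n
    have := LinearMap.finrank_range_add_finrank_ker (((B ∘ₗ A : Module.End ℂ V) + c • 1) ^ n)
    omega
  rw [rnW k, rnW (k + 1), rnV k, rnV (k + 1),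
    ← aux_eq A B c hc k, ← aux_eq A B c hc (k + 1)]
  ring
end

section
/- Let f : X → ℂ be a regular function on an affine variety X with an action of a reductive group H such that f is H-invariant, and let X* = {x ∈ X : f(x) ≠ 0} be the corresponding principal open subset. Then for any x ∈ X*, the H-orbit of x is closed in X* if and only if it is closed in X. -/
/-- If `f : X → ℂ` is a continuous invariant function for a continuous action of a
group `H` on `X`, and `X* = {f ≠ 0}`, then for `x ∈ X*` the `H`-orbit of `x` is
closed in `X*` iff it is closed in `X`. -/
theorem stmt_18 (X : Type) [TopologicalSpace X] (H : Type) [Group H] [MulAction H X]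
    (hc : ∀ g : H, Continuous (fun x : X => g • x))
    (f : X → ℂ) (hf : Continuous f) (hinv : ∀ (g : H) (x : X), f (g • x) = f x)
    (x : X) (hx : f x ≠ 0) :
    IsClosed {y : {z : X // f z ≠ 0} | (y : X) ∈ MulAction.orbit H x}
      ↔ IsClosed (MulAction.orbit H x) := by
  set S := MulAction.orbit H x with hS
  have hconst : ∀ y ∈ S, f y = f x := by
    rintro y ⟨g, rfl⟩; exact hinv g x
  -- closure of S is contained in {z | f z = f x}
  have hclS : closure S ⊆ {z : X | f z = f x} := by
    apply closure_minimal hconst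
    exact isClosed_eq hf continuous_const
  have hopen : IsOpen {z : X | f z ≠ 0} := (isClosed_eq hf continuous_const).isOpen_compl
  have hoemb : IsOpenMap (Subtype.val : {z : X // f z ≠ 0} → X) := hopen.isOpenMap_subtype_val
  constructor
  · intro h
    rw [← closure_eq_iff_isClosed]
    apply Set.Subset.antisymm _ subset_closure
    intro y hy
    have hyne : f y ≠ 0 := by rw [hclS hy]; exact hx
    have : (⟨y, hyne⟩ : {z : X // f z ≠ 0}) ∈
        closure ((Subtype.val : {z : X // f z ≠ 0} → X) ⁻¹' S) := by
      apply hoemb.preimage_closure_subset_closure_preimage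
      exact hy
    have := h.closure_subset this
    exact this
  · intro h
    exact h.preimage continuous_subtype_val
end

section
/- Let M ∈ GL_n(ℂ), and for an ordered list (ξ₁,…,ξ_w) of elements of ℂ* with ∏(M − ξ_i) = 0, define subspaces V₁ = ℂⁿ and V_{i+1} = (M − ξ₁)⋯(M − ξ_i)(ℂⁿ). Then setting b_i : V_i → V_{i+1}, b_i = (M/ξ_i − 1)|_{V_i} and a_i : V_{i+1} ↪ V_i the inclusion, one has: each b_i is surjective, each a_i is injective, M = ξ₁(1 + a₁b₁), 1 + b_i a_i = (ξ_{i+1}/ξ_i)(1 + a_{i+1} b_{i+1}) for 1 ≤ i ≤ w−2, and 1 + b_{w−1} a_{w−1} = ξ_w/ξ_{w−1}·1 on V_w. -/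
/-- For invertible `M ∈ End(V)` with marking `(ξ_0,…,ξ_{w-1})` (nonzero, whose product
polynomial annihilates `M`), `V_i = (M−ξ_0)⋯(M−ξ_{i-1})(V)`,
`b_i = (M/ξ_i − 1)|_{V_i} : V_i → V_{i+1}` and `a_i : V_{i+1} ↪ V_i`: each `b_i` is
surjective, each `a_i` injective, `M = ξ_0(1 + a_0 b_0)`,
`1 + b_i a_i = (ξ_{i+1}/ξ_i)(1 + a_{i+1} b_{i+1})` in the middle range, and
`1 + b_{w-2} a_{w-2} = (ξ_{w-1}/ξ_{w-2})·1` on `V_{w-1}`. -/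
theorem stmt_19 (w : ℕ) (hw : 2 ≤ w)
    (V : Type) [AddCommGroup V] [Module ℂ V] [FiniteDimensional ℂ V]
    (M : Module.End ℂ V) (hM : IsUnit M)
    (ξ : ℕ → ℂ) (hξ : ∀ i < w, ξ i ≠ 0)
    (hann : ((List.range w).map fun j => M - ξ j • 1).prod = 0)
    (Vs : ℕ → Submodule ℂ V)
    (hVs : ∀ i, Vs i = LinearMap.range (((List.range i).map fun j => M - ξ j • 1).prod))
    (b : ∀ i, Vs i →ₗ[ℂ] Vs (i + 1))
    (hb : ∀ i (v : Vs i), ((b i v : Vs (i + 1)) : V) = (ξ i)⁻¹ • M (v : V) - (v : V))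
    (a : ∀ i, Vs (i + 1) →ₗ[ℂ] Vs i)
    (ha : ∀ i (v : Vs (i + 1)), ((a i v : Vs i) : V) = (v : V)) :
    (∀ i, i + 2 ≤ w → Function.Surjective (b i))
      ∧ (∀ i, i + 2 ≤ w → Function.Injective (a i))
      ∧ (∀ v : Vs 0, M (v : V) = ξ 0 • ((v : V) + ((a 0 (b 0 v) : Vs 0) : V)))
      ∧ (∀ i, i + 3 ≤ w →
          (1 : Module.End ℂ (Vs (i + 1))) + (b i) ∘ₗ (a i)
            = (ξ (i + 1) / ξ i) • ((1 : Module.End ℂ (Vs (i + 1))) + (a (i + 1)) ∘ₗ (b (i + 1))))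
      ∧ ((1 : Module.End ℂ (Vs (w - 2 + 1))) + (b (w - 2)) ∘ₗ (a (w - 2))
            = (ξ (w - 2 + 1) / ξ (w - 2)) • 1) := by
  have c1 : ∀ j : ℕ, Commute M (ξ j • (1 : Module.End ℂ V)) := fun j =>
    (Commute.one_right M).smul_right (ξ j)
  have hcomm : ∀ j k : ℕ, Commute (M - ξ j • 1) (M - ξ k • 1) := fun j k =>
    ((Commute.refl M).sub_right (c1 k)).sub_left
      (((c1 j).symm).sub_right ((Commute.one_left _).smul_left (ξ j)))
  have hPF : ∀ (i j : ℕ), Commute (M - ξ j • 1)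
      (((List.range i).map fun k => M - ξ k • 1).prod) := by
    intro i j
    apply Commute.list_prod_right
    intro y hy
    simp only [List.mem_map] at hy
    obtain ⟨k, _, rfl⟩ := hy
    exact hcomm j k
  have hPsucc : ∀ i, ((List.range (i+1)).map fun k => M - ξ k • 1).prod
      = (M - ξ i • 1) * ((List.range i).map fun k => M - ξ k • 1).prod := by
    intro i
    rw [List.range_succ, List.map_append, List.prod_append]
    simp only [List.map_cons, List.map_nil, List.prod_cons, List.prod_nil, mul_one]
    exact (hPF i i).symm
  have hFapp : ∀ (j : ℕ) (x : V), (M - ξ j • 1) x = M x - ξ j • x := by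
    intro j x
    simp [LinearMap.sub_apply]
  have habs : ∀ (c : ℂ) (x y : V), y + (c • x - y) = c • x := by
    intro c x y; abel
  refine ⟨?_, ?_, ?_, ?_, ?_⟩
  · -- surjectivity of b i
    intro i hi u
    have hu : (u : V) ∈ LinearMap.range (((List.range (i+1)).map fun k => M - ξ k • 1).prod) := by
      rw [← hVs]; exact u.2
    obtain ⟨x, hx⟩ := hu
    have hv : (((List.range i).map fun k => M - ξ k • 1).prod) x ∈ Vs i := by
      rw [hVs]; exact ⟨x, rfl⟩
    refine ⟨ξ i • ⟨_, hv⟩, ?_⟩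
    apply Subtype.ext
    rw [hb]
    have hξi : ξ i ≠ 0 := hξ i (by omega)
    rw [hPsucc] at hx
    simp only [SetLike.val_smul, map_smul, smul_smul, inv_mul_cancel₀ hξi, one_smul]
    rw [← hx, Module.End.mul_apply, hFapp]
  · -- injectivity of a i
    intro i _ x y h
    apply Subtype.ext
    have h2 := congrArg (fun z : Vs i => (z : V)) h
    simpa only [ha] using h2
  · -- M = ξ0 (1 + a0 b0)
    intro v
    simp only [ha, hb]
    have hξ0 : ξ 0 ≠ 0 := hξ 0 (by omega)
    rw [habs, smul_smul, mul_inv_cancel₀ hξ0, one_smul]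
  · -- middle relation
    intro i hi
    apply LinearMap.ext
    intro v
    apply Subtype.ext
    have hξ1 : ξ (i+1) ≠ 0 := hξ (i+1) (by omega)
    simp only [LinearMap.add_apply, LinearMap.comp_apply, Module.End.one_apply,
      LinearMap.smul_apply, Submodule.coe_add, SetLike.val_smul, hb, ha]
    rw [habs, habs, smul_smul]
    congr 1
    have hξ0 : ξ i ≠ 0 := hξ i (by omega)
    field_simp
  · -- last relation
    obtain ⟨m, rfl⟩ : ∃ m, w = m + 2 := ⟨w - 2, by omega⟩
    have hm : m + 2 - 2 = m := by omega
    rw [hm]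
    apply LinearMap.ext
    intro v
    apply Subtype.ext
    have heig : M (v : V) = ξ (m+1) • (v : V) := by
      have hv : (v : V) ∈ LinearMap.range (((List.range (m+1)).map fun k => M - ξ k • 1).prod) := by
        rw [← hVs]; exact v.2
      obtain ⟨x, hx⟩ := hv
      have h0 : (M - ξ (m+1) • 1) (v : V) = 0 := by
        rw [← hx, ← Module.End.mul_apply, ← hPsucc (m+1), hann]
        rfl
      rw [hFapp, sub_eq_zero] at h0
      exact h0
    simp only [LinearMap.add_apply, LinearMap.comp_apply, Module.End.one_apply,
      LinearMap.smul_apply, Submodule.coe_add, SetLike.val_smul, hb, ha]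
    rw [heig, smul_smul, habs, div_eq_mul_inv, mul_comm]
end
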